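/- arXiv:math/0011078 — 3 statements merged into one kernel-verified Lean document; each statement's English description precedes it below -/
import Mathlib

section
/- For every real number x, sin(x) = x · ∑_{n=1}^{∞} ∑_{m=1}^{2^n - 1} (-1)^{m+1} 2^{-n} cos(m·x/2^n), where for each n the inner sum is finite and the outer series over n converges. -/
/-!
With `D N = 2⁻ᴺ ∑_{m=1}^{2ᴺ-1} cos (m x / 2ᴺ)`, a Riemann sum for `∫₀¹ cos (t x) dt`, the `n`-th
inner sum is `D n - D (n - 1)`: the points `m / 2ⁿ` with `m = 2 j` even are the points of level
`n - 1`, so the alternating sum is the full sum minus twice that of the previous level. Hence the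
series telescopes to `D N`. The Dirichlet-kernel identity
`2 sin (h/2) ∑_{m=1}^K cos (m h) = sin ((K + 1/2) h) - sin (h/2)` at `h = x / 2ᴺ` turns `D N` into
`(sin (x - t) - sin t) / (x sinc t)` with `t = x / 2ᴺ⁺¹ → 0`, so `D N → sinc x` (for `x = 0`
directly, as `D N = 1 - 2⁻ᴺ`), and `sin x = x sinc x`.
-/

open Finset Real Filter Topology

lemma sin_eq_mul_sinc (x : ℝ) : sin x = x * sinc x := by
  by_cases hx : x = 0
  · simp [hx]
  · rw [sinc_of_ne_zero hx, mul_div_cancel₀ _ hx]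

lemma two_mul_sin_half_mul_sum_cos (h : ℝ) (K : ℕ) :
    2 * sin (h / 2) * ∑ m ∈ Icc 1 K, cos (m * h) = sin ((K + 1 / 2) * h) - sin (h / 2) := by
  induction K with
  | zero => simp [div_eq_inv_mul]
  | succ K ih =>
    have hsub : h / 2 - ((K + 1 : ℕ) : ℝ) * h = -((K + 1 / 2) * h) := by push_cast; ring
    have hadd : h / 2 + ((K + 1 : ℕ) : ℝ) * h = ((K + 1 : ℕ) + 1 / 2) * h := by push_cast; ring
    rw [sum_Icc_succ_top (by omega), mul_add, ih, two_mul_sin_mul_cos, hsub, hadd, sin_neg]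
    ring

lemma sum_Icc_neg_one_pow_mul {R : Type*} [CommRing R] (g : ℕ → R) (K : ℕ) :
    ∑ m ∈ Icc 1 (2 * K + 1), (-1) ^ (m + 1) * g m
      = ∑ m ∈ Icc 1 (2 * K + 1), g m - 2 * ∑ j ∈ Icc 1 K, g (2 * j) := by
  induction K with
  | zero => simp
  | succ K ih =>
    have hK : 2 * (K + 1) + 1 = 2 * K + 1 + 1 + 1 := by ring
    simp only [hK, sum_Icc_succ_top (by omega : 1 ≤ 2 * K + 1 + 1 + 1),
      sum_Icc_succ_top (by omega : 1 ≤ 2 * K + 1 + 1), sum_Icc_succ_top (by omega : 1 ≤ K + 1), ih]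
    simp only [pow_succ, pow_mul]
    ring_nf

noncomputable def dyadicCosSum (x : ℝ) (N : ℕ) : ℝ :=
  (2 ^ N)⁻¹ * ∑ m ∈ Icc (1 : ℕ) (2 ^ N - 1), cos (m * x / 2 ^ N)

lemma two_pow_succ_sub_one (N : ℕ) : 2 ^ (N + 1) - 1 = 2 * (2 ^ N - 1) + 1 := by
  have := Nat.one_le_two_pow (n := N)
  rw [pow_succ]
  omega

lemma alternating_sum_eq_dyadicCosSum_succ_sub (x : ℝ) (N : ℕ) :
    ∑ m ∈ Icc (1 : ℕ) (2 ^ (N + 1) - 1),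
        (-1 : ℝ) ^ (m + 1) / 2 ^ (N + 1) * cos (m * x / 2 ^ (N + 1))
      = dyadicCosSum x (N + 1) - dyadicCosSum x N := by
  have heven (j : ℕ) : cos (((2 * j : ℕ) : ℝ) * x / 2 ^ (N + 1)) = cos (j * x / 2 ^ N) := by
    rw [pow_succ]; push_cast; ring_nf
  have hfactor : ∑ m ∈ Icc (1 : ℕ) (2 ^ (N + 1) - 1),
        (-1 : ℝ) ^ (m + 1) / 2 ^ (N + 1) * cos (m * x / 2 ^ (N + 1))
      = (2 ^ (N + 1))⁻¹ * ∑ m ∈ Icc (1 : ℕ) (2 ^ (N + 1) - 1),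
        (-1 : ℝ) ^ (m + 1) * cos (m * x / 2 ^ (N + 1)) := by
    rw [mul_sum]
    exact sum_congr rfl fun m _ => by ring
  rw [hfactor, two_pow_succ_sub_one, sum_Icc_neg_one_pow_mul, ← two_pow_succ_sub_one]
  simp only [dyadicCosSum, heven]
  rw [pow_succ]
  ring

lemma sum_Icc_sum_Icc_eq_dyadicCosSum (x : ℝ) (N : ℕ) :
    ∑ n ∈ Icc (1 : ℕ) N, ∑ m ∈ Icc (1 : ℕ) (2 ^ n - 1),
        (-1 : ℝ) ^ (m + 1) / 2 ^ n * cos (m * x / 2 ^ n)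
      = dyadicCosSum x N := by
  induction N with
  | zero => simp [dyadicCosSum]
  | succ N ih =>
    rw [sum_Icc_succ_top (by omega), ih, alternating_sum_eq_dyadicCosSum_succ_sub]
    ring

lemma mul_sinc_mul_dyadicCosSum (x : ℝ) (N : ℕ) :
    x * sinc (x / 2 ^ (N + 1)) * dyadicCosSum x N
      = sin (x - x / 2 ^ (N + 1)) - sin (x / 2 ^ (N + 1)) := by
  have hhalf : x / 2 ^ N / 2 = x / 2 ^ (N + 1) := by rw [pow_succ, div_div]
  have hend : ((2 ^ N - 1 : ℕ) + 1 / 2 : ℝ) * (x / 2 ^ N) = x - x / 2 ^ (N + 1) := by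
    rw [Nat.cast_sub Nat.one_le_two_pow]
    field_simp
    push_cast
    ring
  have key := two_mul_sin_half_mul_sum_cos (x / 2 ^ N) (2 ^ N - 1)
  rw [hhalf, hend] at key
  rw [← key, dyadicCosSum, sin_eq_mul_sinc (x / 2 ^ (N + 1))]
  simp only [mul_div_assoc]
  rw [pow_succ]
  field_simp

lemma tendsto_inv_two_pow : Tendsto (fun N : ℕ => ((2 : ℝ) ^ N)⁻¹) atTop (𝓝 0) :=
  tendsto_inv_atTop_zero.comp (tendsto_pow_atTop_atTop_of_one_lt one_lt_two)

lemma tendsto_div_two_pow_succ (x : ℝ) :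
    Tendsto (fun N : ℕ => x / 2 ^ (N + 1)) atTop (𝓝 0) := by
  simpa [div_eq_mul_inv] using (tendsto_inv_two_pow.comp (tendsto_add_atTop_nat 1)).const_mul x

lemma dyadicCosSum_zero (N : ℕ) : dyadicCosSum 0 N = 1 - (2 ^ N)⁻¹ := by
  simp only [dyadicCosSum, mul_zero, zero_div, cos_zero, sum_const, Nat.card_Icc,
    add_tsub_cancel_right, nsmul_eq_mul, Nat.cast_sub Nat.one_le_two_pow, Nat.cast_pow,
    Nat.cast_ofNat, Nat.cast_one, mul_one]
  field_simp

lemma tendsto_dyadicCosSum (x : ℝ) : Tendsto (dyadicCosSum x) atTop (𝓝 (sinc x)) := by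
  rcases eq_or_ne x 0 with rfl | hx
  · rw [funext dyadicCosSum_zero, sinc_zero]
    simpa using tendsto_const_nhds.sub tendsto_inv_two_pow
  set t : ℕ → ℝ := fun N => x / 2 ^ (N + 1)
  have ht : Tendsto t atTop (𝓝 0) := tendsto_div_two_pow_succ x
  have hsinc : Tendsto (fun N => x * sinc (t N)) atTop (𝓝 (x * sinc 0)) :=
    ((continuous_sinc.tendsto 0).comp ht).const_mul x
  have hsin : Tendsto (fun N => sin (x - t N) - sin (t N)) atTop (𝓝 (sin (x - 0) - sin 0)) :=
    ((continuous_sin.tendsto _).comp (tendsto_const_nhds.sub ht)).sub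
      ((continuous_sin.tendsto 0).comp ht)
  have hlim0 : x * sinc 0 ≠ 0 := by simpa using hx
  rw [sinc_of_ne_zero hx]
  have hquot := hsin.div hsinc hlim0
  simp only [sub_zero, sin_zero, sinc_zero, mul_one] at hquot
  refine hquot.congr' ?_
  filter_upwards [hsinc.eventually_ne hlim0] with N hN
  rw [Pi.div_apply, eq_comm, eq_div_iff hN, mul_comm]
  exact mul_sinc_mul_dyadicCosSum x N

theorem stmt_5 (x : ℝ) :
    ∃ S : ℝ,
      Filter.Tendsto
        (fun N : ℕ => ∑ n ∈ Finset.Icc (1:ℕ) N, ∑ m ∈ Finset.Icc (1:ℕ) (2 ^ n - 1),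
          (-1 : ℝ) ^ (m + 1) / 2 ^ n * Real.cos ((m:ℝ) * x / 2 ^ n))
        Filter.atTop (nhds S) ∧
      Real.sin x = x * S := by
  refine ⟨sinc x, ?_, sin_eq_mul_sinc x⟩
  simpa only [sum_Icc_sum_Icc_eq_dyadicCosSum] using tendsto_dyadicCosSum x
end

section
/- For all real numbers a and b with b > 0, ∫_0^b (sin(a·x)/x) dx = ∑_{n=1}^{∞} ∑_{m=1}^{2^n - 1} ((-1)^{m+1}/m) · sin(m·b·a/2^n), where for each n the inner sum is finite and the outer series over n converges. (The integrand is extended continuously by the value a at x = 0.) -/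
/-!
With `c = a b` and `D_n = ∑_{m < 2^n} sin (m c / 2^n) / m`, the `n`-th inner sum equals
`D_n - D_{n-1}`: writing `(-1)^(m+1) = 1 - 2·[m even]`, the even terms `2 sin (2k c / 2^n) / (2k)`
add up to `D_{n-1}`. So the partial sums telescope to `D_N`, and `D_N + c / 2^N` is the left
Riemann sum of `sinc` on `[0, c]` with `2^N` equal pieces, which tends to `∫_0^c sinc`. The
substitution `t = a x` identifies this with the integral of the statement.
-/

open Filter Finset Real Set Topology intervalIntegral

theorem abs_mul_sub_integral_le {f : ℝ → ℝ} {x y ε : ℝ}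
    (hf : IntervalIntegrable f MeasureTheory.volume x y)
    (hε : ∀ t ∈ uIcc x y, |f t - f x| ≤ ε) :
    |(y - x) * f x - ∫ t in x..y, f t| ≤ ε * |y - x| := by
  have hconst : (y - x) * f x = ∫ _ in x..y, f x := by simp
  rw [hconst, ← integral_sub (f := fun _ => f x) intervalIntegrable_const hf, ← Real.norm_eq_abs]
  refine norm_integral_le_of_norm_le_const fun t ht => ?_
  rw [Real.norm_eq_abs, abs_sub_comm]
  exact hε t (uIoc_subset_uIcc ht)

theorem add_mul_sub_mem_uIcc {a b t : ℝ} (ht : t ∈ Icc (0 : ℝ) 1) : a + t * (b - a) ∈ uIcc a b :=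
  convex_uIcc a b |>.add_smul_sub_mem left_mem_uIcc right_mem_uIcc ht

theorem tendsto_sum_leftRiemann {f : ℝ → ℝ} {a b : ℝ} (hf : ContinuousOn f (uIcc a b)) :
    Tendsto (fun n : ℕ => ∑ i ∈ range n, (b - a) / n * f (a + i * ((b - a) / n))) atTop
      (𝓝 (∫ x in a..b, f x)) := by
  rw [Metric.tendsto_nhds]
  intro ε hε
  set ε' := ε / (|b - a| + 1) with hε'
  obtain ⟨δ, hδ, hfδ⟩ := Metric.uniformContinuousOn_iff_le.mp
    (isCompact_uIcc.uniformContinuousOn_of_continuous hf) ε' (by positivity)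
  have hmesh : Tendsto (fun n : ℕ => (b - a) / n) atTop (𝓝 0) :=
    tendsto_const_div_atTop_nhds_zero_nat (b - a)
  filter_upwards [Metric.tendsto_nhds.mp hmesh δ hδ, eventually_ne_atTop 0] with n hn hn0
  rw [dist_zero_right, Real.norm_eq_abs] at hn
  set h := (b - a) / n with hh
  set x : ℕ → ℝ := fun i => a + i * h with hx
  have hnh : (n : ℝ) * h = b - a := by rw [hh]; field_simp
  have hx_mem : ∀ i ≤ n, x i ∈ uIcc a b := by
    intro i hi
    have : x i = a + (i / n : ℝ) * (b - a) := by rw [hx, ← hnh]; field_simp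
    rw [this]
    exact add_mul_sub_mem_uIcc
      ⟨by positivity, div_le_one_of_le₀ (by exact_mod_cast hi) (by positivity)⟩
  have hint : ∀ i < n, IntervalIntegrable f MeasureTheory.volume (x i) (x (i + 1)) := fun i hi =>
    (hf.mono (uIcc_subset_uIcc (hx_mem i hi.le) (hx_mem (i + 1) hi))).intervalIntegrable
  have hpiece : ∀ i ∈ range n, |h * f (x i) - ∫ t in x i..x (i + 1), f t| ≤ ε' * |h| := by
    intro i hi
    rw [Finset.mem_range] at hi
    have hstep : x (i + 1) - x i = h := by rw [hx]; push_cast; ring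
    rw [← hstep]
    refine abs_mul_sub_integral_le (hint i hi) fun t ht => ?_
    have ht' : t ∈ uIcc a b := uIcc_subset_uIcc (hx_mem i hi.le) (hx_mem (i + 1) hi) ht
    refine hfδ t ht' (x i) (hx_mem i hi.le) ?_
    rw [Real.dist_eq]
    exact (abs_sub_left_of_mem_uIcc ht).trans (hstep ▸ hn.le)
  have hsplit : ∫ t in a..b, f t = ∑ i ∈ range n, ∫ t in x i..x (i + 1), f t := by
    rw [sum_integral_adjacent_intervals hint]
    simp [hx, hnh]
  rw [Real.dist_eq, hsplit, ← sum_sub_distrib]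
  calc |∑ i ∈ range n, (h * f (x i) - ∫ t in x i..x (i + 1), f t)|
      ≤ ∑ i ∈ range n, ε' * |h| := (abs_sum_le_sum_abs _ _).trans (sum_le_sum hpiece)
    _ = ε' * |b - a| := by
      rw [sum_const, card_range, nsmul_eq_mul, ← hnh, abs_mul, Nat.abs_cast]; ring
    _ < ε := by
      rw [hε', div_mul_eq_mul_div, div_lt_iff₀ (by positivity)]
      nlinarith [abs_nonneg (b - a)]

theorem sum_Icc_one_sub_one_eq_sum_range {M : Type*} [AddCommMonoid M] (f : ℕ → M)
    (hf : f 0 = 0) (K : ℕ) : ∑ m ∈ Icc 1 (K - 1), f m = ∑ m ∈ range K, f m := by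
  refine sum_subset (fun m hm => ?_) (fun m hm hm' => ?_)
  · simp only [Finset.mem_Icc, Finset.mem_range] at hm ⊢; omega
  · simp only [Finset.mem_Icc, Finset.mem_range] at hm hm'
    rw [show m = 0 by omega, hf]

theorem sum_range_two_mul_neg_one_pow_mul {R : Type*} [CommRing R] (g : ℕ → R) (M : ℕ) :
    ∑ m ∈ range (2 * M), (-1) ^ (m + 1) * g m
      = ∑ m ∈ range (2 * M), g m - 2 * ∑ k ∈ range M, g (2 * k) := by
  induction M with
  | zero => simp
  | succ M ih =>
    rw [show 2 * (M + 1) = 2 * M + 1 + 1 by ring]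
    simp only [sum_range_succ]
    rw [ih]
    simp only [pow_succ, pow_mul]
    ring

-- The `m = 0` term is `sin 0 / 0 = 0`.
noncomputable def dyadicSinSum (c : ℝ) (n : ℕ) : ℝ := ∑ m ∈ range (2 ^ n), sin (m * c / 2 ^ n) / m

theorem sum_Icc_neg_one_pow_div_mul_sin_eq (c : ℝ) (n : ℕ) :
    ∑ m ∈ Icc (1 : ℕ) (2 ^ (n + 1) - 1), (-1 : ℝ) ^ (m + 1) / (m : ℝ) * sin (m * c / 2 ^ (n + 1))
      = dyadicSinSum c (n + 1) - dyadicSinSum c n := by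
  rw [sum_Icc_one_sub_one_eq_sum_range _ (by simp), pow_succ', dyadicSinSum, dyadicSinSum,
    ← pow_succ']
  simp only [div_mul_eq_mul_div, mul_div_assoc]
  rw [pow_succ', sum_range_two_mul_neg_one_pow_mul, ← pow_succ', mul_sum]
  congr 1
  refine sum_congr rfl fun k _ => ?_
  rcases eq_or_ne k 0 with rfl | hk
  · simp
  push_cast
  field_simp
  ring_nf

theorem sum_Icc_sum_Icc_neg_one_pow_div_mul_sin (c : ℝ) (N : ℕ) :
    ∑ n ∈ Icc (1 : ℕ) N, ∑ m ∈ Icc (1 : ℕ) (2 ^ n - 1),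
        (-1 : ℝ) ^ (m + 1) / (m : ℝ) * sin (m * c / 2 ^ n) = dyadicSinSum c N := by
  rw [← Finset.Ico_add_one_right_eq_Icc, sum_Ico_eq_sum_range, Nat.add_sub_cancel]
  simp only [add_comm 1, sum_Icc_neg_one_pow_div_mul_sin_eq]
  rw [sum_range_sub]
  simp [dyadicSinSum]

theorem mul_sinc_natCast_mul (h : ℝ) (m : ℕ) :
    h * sinc (m * h) = sin (m * h) / m + if m = 0 then h else 0 := by
  rcases eq_or_ne m 0 with rfl | hm
  · simp
  rcases eq_or_ne h 0 with rfl | hh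
  · simp
  rw [sinc_of_ne_zero (by positivity), if_neg hm]
  field_simp
  ring

theorem dyadicSinSum_eq (c : ℝ) (N : ℕ) :
    dyadicSinSum c N = ∑ i ∈ range (2 ^ N), c / 2 ^ N * sinc (i * (c / 2 ^ N)) - c / 2 ^ N := by
  simp only [mul_sinc_natCast_mul, sum_add_distrib, sum_ite_eq', Finset.mem_range,
    Nat.two_pow_pos, if_true, dyadicSinSum, mul_div_assoc]
  ring

theorem tendsto_dyadicSinSum (c : ℝ) :
    Tendsto (dyadicSinSum c) atTop (𝓝 (∫ x in 0..c, sinc x)) := by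
  have h2N : Tendsto (fun N : ℕ => 2 ^ N) atTop atTop :=
    tendsto_pow_atTop_atTop_of_one_lt one_lt_two
  have hriemann :=
    (tendsto_sum_leftRiemann (a := 0) (b := c) continuous_sinc.continuousOn).comp h2N
  have hmesh : Tendsto (fun N : ℕ => c / 2 ^ N) atTop (𝓝 0) := by
    simpa [Function.comp_def] using (tendsto_const_div_atTop_nhds_zero_nat c).comp h2N
  convert hriemann.sub hmesh using 1
  · ext N
    simp [dyadicSinSum_eq]
  · rw [sub_zero]

theorem integral_ite_sin_mul_div (a b : ℝ) :
    ∫ x in (0 : ℝ)..b, (if x = 0 then a else sin (a * x) / x) = ∫ x in 0..a * b, sinc x := by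
  have hsinc : ∀ x : ℝ, (if x = 0 then a else sin (a * x) / x) = a * sinc (a * x) := by
    intro x
    rcases eq_or_ne x 0 with rfl | hx
    · simp
    rcases eq_or_ne a 0 with rfl | ha
    · simp
    rw [if_neg hx, sinc_of_ne_zero (mul_ne_zero ha hx)]
    field_simp
  simp only [hsinc, integral_const_mul, mul_integral_comp_mul_left, mul_zero]

theorem stmt_7_general (a b : ℝ) :
    ∃ S : ℝ,
      Filter.Tendsto
        (fun N : ℕ => ∑ n ∈ Finset.Icc (1:ℕ) N, ∑ m ∈ Finset.Icc (1:ℕ) (2 ^ n - 1),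
          (-1 : ℝ) ^ (m + 1) / (m:ℝ) * Real.sin ((m:ℝ) * b * a / 2 ^ n))
        Filter.atTop (nhds S) ∧
      (∫ x in (0:ℝ)..b, (if x = 0 then a else Real.sin (a * x) / x)) = S := by
  refine ⟨∫ x in 0..a * b, sinc x, ?_, integral_ite_sin_mul_div a b⟩
  simp only [mul_assoc, mul_comm b a, sum_Icc_sum_Icc_neg_one_pow_div_mul_sin]
  exact tendsto_dyadicSinSum (a * b)

theorem stmt_7 (a b : ℝ) (hb : 0 < b) :
    ∃ S : ℝ,
      Filter.Tendsto
        (fun N : ℕ => ∑ n ∈ Finset.Icc (1:ℕ) N, ∑ m ∈ Finset.Icc (1:ℕ) (2 ^ n - 1),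
          (-1 : ℝ) ^ (m + 1) / (m:ℝ) * Real.sin ((m:ℝ) * b * a / 2 ^ n))
        Filter.atTop (nhds S) ∧
      (∫ x in (0:ℝ)..b, (if x = 0 then a else Real.sin (a * x) / x)) = S :=
  stmt_7_general a b
end

section
/- For all real numbers a and b with b > 0, ∫_0^b exp(-a·x²) dx = b · ∑_{n=1}^{∞} ∑_{m=1}^{2^n - 1} (-1)^{m+1} 2^{-n} exp(-a·(m·b)²/4^n), where for each n the inner sum is finite and the outer series over n converges. -/
/-!
Write `φ t = exp (-a (b t)²)`, so that the integral is `b ∫₀¹ φ`. Passing from level `n` to level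
`n + 1`, the inner sum adds the new (odd) dyadic nodes with sign `+` and subtracts the old (even)
ones, whose weight halves; hence the partial sums telescope to the dyadic Riemann sums
`2⁻ᴺ ∑_{0 < m < 2ᴺ} φ (m / 2ᴺ)`, which converge to `∫₀¹ φ` because `φ` is uniformly continuous
on `[0, 1]`.
-/

open Finset Filter Topology

section RiemannSum

variable {E : Type*} [NormedAddCommGroup E] [NormedSpace ℝ E] [CompleteSpace E] {φ : ℝ → E}

theorem integral_sub_riemannSum_unitInterval (hφ : ContinuousOn φ (Set.Icc 0 1)) {n : ℕ}
    (hn : n ≠ 0) :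
    (∫ t in (0:ℝ)..1, φ t) - (n : ℝ)⁻¹ • ∑ k ∈ range n, φ (k / n) =
      ∑ k ∈ range n, ∫ t in (k / n : ℝ)..(k + 1) / n, (φ t - φ (k / n)) := by
  have hn' : (n : ℝ) ≠ 0 := Nat.cast_ne_zero.2 hn
  have hsub : ∀ k < n, Set.uIcc ((k : ℝ) / n) ((k + 1) / n) ⊆ Set.Icc 0 1 := by
    intro k hk
    rw [Set.uIcc_of_le (by gcongr; linarith)]
    refine Set.Icc_subset_Icc (by positivity) ?_
    rw [div_le_one (by positivity)]
    exact_mod_cast hk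
  have hint : ∀ k < n, IntervalIntegrable φ MeasureTheory.volume ((k : ℝ) / n) ((k + 1) / n) :=
    fun k hk => (hφ.mono (hsub k hk)).intervalIntegrable
  have hadj := intervalIntegral.sum_integral_adjacent_intervals (a := fun k : ℕ => (k : ℝ) / n)
    (fun k hk => by simpa using hint k hk)
  simp only [Nat.cast_add, Nat.cast_one, Nat.cast_zero, zero_div, div_self hn'] at hadj
  rw [← hadj, smul_sum, ← sum_sub_distrib]
  refine sum_congr rfl fun k hk => ?_
  rw [intervalIntegral.integral_sub (hint k (mem_range.1 hk)) intervalIntegrable_const,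
    intervalIntegral.integral_const]
  congr 2
  field_simp
  ring

theorem tendsto_riemannSum_unitInterval (hφ : ContinuousOn φ (Set.Icc 0 1)) :
    Tendsto (fun n : ℕ => (n : ℝ)⁻¹ • ∑ k ∈ range n, φ (k / n)) atTop
      (𝓝 (∫ t in (0:ℝ)..1, φ t)) := by
  rw [Metric.tendsto_atTop]
  intro ε hε
  obtain ⟨δ, hδ, hφδ⟩ := Metric.uniformContinuousOn_iff.1
    (isCompact_Icc.uniformContinuousOn_of_continuous hφ) (ε / 2) (half_pos hε)
  obtain ⟨N, hN⟩ := exists_nat_gt δ⁻¹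
  refine ⟨N, fun n hn => ?_⟩
  have hNn : δ⁻¹ < n := hN.trans_le (Nat.cast_le.2 hn)
  have hn0 : (0 : ℝ) < n := (inv_pos.2 hδ).trans hNn
  have hpiece : ∀ k ∈ range n,
      ‖∫ t in (k / n : ℝ)..(k + 1) / n, (φ t - φ (k / n))‖ ≤ ε / 2 * (n : ℝ)⁻¹ := by
    intro k hk
    have hk : (k : ℝ) + 1 ≤ n := by exact_mod_cast mem_range.1 hk
    have hkn : (k : ℝ) / n ≤ (k + 1) / n := by gcongr; linarith
    refine (intervalIntegral.norm_integral_le_of_norm_le_const (C := ε / 2)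
      fun t ht => ?_).trans_eq ?_
    · rw [Set.uIoc_of_le hkn] at ht
      have h0 : 0 ≤ (k : ℝ) / n := by positivity
      have h1 : (k + 1 : ℝ) / n ≤ 1 := (div_le_one hn0).2 hk
      rw [← dist_eq_norm]
      refine (hφδ t ⟨by linarith [ht.1], by linarith [ht.2]⟩ _ ⟨h0, by linarith⟩ ?_).le
      rw [Real.dist_eq, abs_of_nonneg (by linarith [ht.1])]
      calc t - k / n ≤ (k + 1) / n - k / n := by linarith [ht.2]
        _ = (n : ℝ)⁻¹ := by field_simp; ring
        _ < δ := (inv_lt_comm₀ hn0 hδ).2 hNn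
    · rw [abs_of_nonneg (by linarith)]
      field_simp
      ring
  rw [dist_comm, dist_eq_norm,
    integral_sub_riemannSum_unitInterval hφ (by exact_mod_cast hn0.ne')]
  calc ‖∑ k ∈ range n, ∫ t in (k / n : ℝ)..(k + 1) / n, (φ t - φ (k / n))‖
      ≤ ∑ k ∈ range n, ε / 2 * (n : ℝ)⁻¹ := (norm_sum_le _ _).trans (sum_le_sum hpiece)
    _ = ε / 2 := by rw [sum_const, card_range, nsmul_eq_mul]; field_simp
    _ < ε := half_lt_self hε

end RiemannSum

theorem Finset.sum_range_two_mul {M : Type*} [AddCommMonoid M] (g : ℕ → M) (K : ℕ) :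
    ∑ m ∈ range (2 * K), g m = ∑ j ∈ range K, (g (2 * j) + g (2 * j + 1)) := by
  induction K with
  | zero => simp
  | succ K ih =>
    rw [mul_add, mul_one, sum_range_succ, sum_range_succ, ih, sum_range_succ, add_assoc]

theorem Finset.sum_range_eq_add_sum_Icc_one {M : Type*} [AddCommMonoid M] (g : ℕ → M) {K : ℕ}
    (hK : K ≠ 0) : ∑ m ∈ range K, g m = g 0 + ∑ m ∈ Icc 1 (K - 1), g m := by
  rw [Icc_sub_one_right_eq_Ico_of_not_isMin (by simpa using hK), range_eq_Ico,
    sum_eq_sum_Ico_succ_bot (Nat.pos_of_ne_zero hK)]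

section DyadicSum

variable (φ : ℝ → ℝ)

noncomputable def interiorDyadicSum (n : ℕ) : ℝ :=
  ∑ m ∈ Icc (1 : ℕ) (2 ^ n - 1), φ ((m : ℝ) / 2 ^ n) / 2 ^ n

theorem interiorDyadicSum_eq (n : ℕ) :
    interiorDyadicSum φ n =
      (2 ^ n : ℝ)⁻¹ • ∑ m ∈ range (2 ^ n), φ ((m : ℝ) / 2 ^ n) - φ 0 / 2 ^ n := by
  rw [sum_range_eq_add_sum_Icc_one _ (pow_ne_zero _ two_ne_zero), smul_add, interiorDyadicSum,
    smul_sum]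
  simp [div_eq_inv_mul]

theorem sum_Icc_alternating_dyadic_succ (n : ℕ) :
    ∑ m ∈ Icc (1 : ℕ) (2 ^ (n + 1) - 1),
        (-1) ^ (m + 1) / 2 ^ (n + 1) * φ ((m : ℝ) / 2 ^ (n + 1)) =
      interiorDyadicSum φ (n + 1) - interiorDyadicSum φ n := by
  have hpairs :
      ∑ m ∈ range (2 ^ (n + 1)), (-1) ^ (m + 1) / 2 ^ (n + 1) * φ ((m : ℝ) / 2 ^ (n + 1)) =
        (2 ^ (n + 1) : ℝ)⁻¹ * ∑ m ∈ range (2 ^ (n + 1)), φ ((m : ℝ) / 2 ^ (n + 1)) -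
          (2 ^ n : ℝ)⁻¹ * ∑ j ∈ range (2 ^ n), φ ((j : ℝ) / 2 ^ n) := by
    rw [mul_sum, mul_sum, pow_succ' 2 n, sum_range_two_mul, sum_range_two_mul, ← sum_sub_distrib]
    refine sum_congr rfl fun j _ => ?_
    have hj : ((2 * j : ℕ) : ℝ) / 2 ^ (n + 1) = j / 2 ^ n := by
      push_cast; rw [pow_succ]; field_simp
    rw [hj]
    simp only [pow_succ, pow_mul]
    ring
  have hzero := sum_range_eq_add_sum_Icc_one (K := 2 ^ (n + 1))
    (fun m => (-1 : ℝ) ^ (m + 1) / 2 ^ (n + 1) * φ (m / 2 ^ (n + 1))) (pow_ne_zero _ two_ne_zero)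
  rw [interiorDyadicSum_eq, interiorDyadicSum_eq]
  simp only [smul_eq_mul, hpairs, zero_add, pow_one, CharP.cast_eq_zero, zero_div] at hzero ⊢
  linear_combination -hzero

theorem sum_Icc_alternating_dyadic_eq_interiorDyadicSum (N : ℕ) :
    ∑ n ∈ Icc (1 : ℕ) N, ∑ m ∈ Icc (1 : ℕ) (2 ^ n - 1),
        (-1) ^ (m + 1) / 2 ^ n * φ ((m : ℝ) / 2 ^ n) =
      interiorDyadicSum φ N := by
  induction N with
  | zero => simp [interiorDyadicSum]
  | succ N ih => rw [sum_Icc_succ_top (by omega), ih, sum_Icc_alternating_dyadic_succ]; ring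

theorem tendsto_interiorDyadicSum (hφ : ContinuousOn φ (Set.Icc 0 1)) :
    Tendsto (interiorDyadicSum φ) atTop (𝓝 (∫ t in (0:ℝ)..1, φ t)) := by
  have hpow : Tendsto (fun N : ℕ => 2 ^ N) atTop atTop :=
    tendsto_pow_atTop_atTop_of_one_lt one_lt_two
  have hriemann := (tendsto_riemannSum_unitInterval hφ).comp hpow
  have hzero : Tendsto (fun N : ℕ => φ 0 / 2 ^ N) atTop (𝓝 0) :=
    tendsto_const_nhds.div_atTop (tendsto_pow_atTop_atTop_of_one_lt one_lt_two)
  rw [funext (interiorDyadicSum_eq φ)]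
  simpa [Function.comp_def] using hriemann.sub hzero

end DyadicSum

theorem stmt_9_general (a b : ℝ) :
    ∃ S : ℝ,
      Filter.Tendsto
        (fun N : ℕ => ∑ n ∈ Finset.Icc (1:ℕ) N, ∑ m ∈ Finset.Icc (1:ℕ) (2 ^ n - 1),
          (-1 : ℝ) ^ (m + 1) / 2 ^ n * Real.exp (-a * ((m:ℝ) * b) ^ 2 / 4 ^ n))
        Filter.atTop (nhds S) ∧
      (∫ x in (0:ℝ)..b, Real.exp (-a * x ^ 2)) = b * S := by
  set φ : ℝ → ℝ := fun t => Real.exp (-a * (b * t) ^ 2)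
  have hterm : ∀ n m : ℕ, Real.exp (-a * ((m : ℝ) * b) ^ 2 / 4 ^ n) = φ (m / 2 ^ n) := by
    intro n m
    rw [show (4 : ℝ) ^ n = (2 ^ n) ^ 2 by rw [← pow_mul, mul_comm, pow_mul]; norm_num]
    simp only [φ]
    field_simp
  refine ⟨∫ t in (0:ℝ)..1, φ t, ?_, ?_⟩
  · simp only [hterm, sum_Icc_alternating_dyadic_eq_interiorDyadicSum]
    exact tendsto_interiorDyadicSum φ (by fun_prop : Continuous φ).continuousOn
  · have h := intervalIntegral.mul_integral_comp_mul_left (a := 0) (b := 1)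
      (f := fun x => Real.exp (-a * x ^ 2)) b
    rw [mul_zero, mul_one] at h
    exact h.symm

theorem stmt_9 (a b : ℝ) (hb : 0 < b) :
    ∃ S : ℝ,
      Filter.Tendsto
        (fun N : ℕ => ∑ n ∈ Finset.Icc (1:ℕ) N, ∑ m ∈ Finset.Icc (1:ℕ) (2 ^ n - 1),
          (-1 : ℝ) ^ (m + 1) / 2 ^ n * Real.exp (-a * ((m:ℝ) * b) ^ 2 / 4 ^ n))
        Filter.atTop (nhds S) ∧
      (∫ x in (0:ℝ)..b, Real.exp (-a * x ^ 2)) = b * S :=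
  stmt_9_general a b
end
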